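/- In the drainage network on Z^2, if (x,t) is open then the ancestor cluster C(x,t) is enclosed between the two dual paths starting at the right dual neighbour r̂(x,t) and left dual neighbour l̂(x,t): every (y, t-k) ∈ C_k(x,t) satisfies ĥ^k(l̂(x,t))(1) < y < ĥ^k(r̂(x,t))(1) for 0 ≤ k < L(x,t). -/

import Mathlib

open Set

/-- One step of the dual graph: from a dual point `(u,s)` (real first coordinate, integer level)
to `((a^l(u,s) + a^r(u,s))/2, s-1)`. -/
noncomputable def dualStep (al ar : ℝ → ℤ → ℤ) : ℝ × ℤ → ℝ × ℤ :=
  fun w => (((al w.1 w.2 : ℝ) + (ar w.1 w.2 : ℝ)) / 2, w.2 - 1)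

/-!
Paths of the drainage network do not cross: choosing a nearest open vertex on the next level is
monotone in the starting point. Hence, if the dual path has reached `(u, s)` with an ancestor `y`
on level `s - 1` whose successor lies right of `u`, then `a^r(u, s) ≤ y`, and the next dual point
`(a^l + a^r)/2` lies strictly left of `y` because `a^l < a^r`. Symmetrically on the right, and
induction on the generation, starting from `x - J⁻/2 < x < x + J⁺/2`, encloses the whole cluster.
-/

theorem monotone_of_isNearest {S : Set ℤ} {f : ℤ → ℤ} (hmem : ∀ z, f z ∈ S)
    (hmin : ∀ z, ∀ w ∈ S, |f z - z| ≤ |w - z|) : Monotone f := by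
  intro z₁ z₂ hz
  obtain hz | rfl := hz.lt_or_eq
  · by_contra! hlt
    have h₁ := hmin z₁ (f z₂) (hmem z₂)
    have h₂ := hmin z₂ (f z₁) (hmem z₁)
    simp only [Int.abs_eq_natAbs] at h₁ h₂
    omega
  · exact le_rfl

namespace DrainageNetwork

variable {B : ℤ × ℤ → Bool} {h : ℤ × ℤ → ℤ × ℤ} {al ar : ℝ → ℤ → ℤ}

theorem h_eq (hlevel : ∀ u, (h u).2 = u.2 + 1) (z s : ℤ) : h (z, s) = ((h (z, s)).1, s + 1) :=
  Prod.ext rfl (hlevel _)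

theorem monotone_fst_h (hlevel : ∀ u, (h u).2 = u.2 + 1)
    (hopen : ∀ x t : ℤ, B (h (x, t)) = true ∧
      ∀ z : ℤ, B (z, t + 1) = true → |(h (x, t)).1 - x| ≤ |z - x|) (s : ℤ) :
    Monotone fun z => (h (z, s)).1 :=
  monotone_of_isNearest (S := {w | B (w, s + 1) = true})
    (fun z => by show B (_, _) = true; rw [← h_eq hlevel]; exact (hopen z s).1)
    (fun z => (hopen z s).2)

theorem al_lt_ar (hlevel : ∀ u, (h u).2 = u.2 + 1)
    (hopen : ∀ x t : ℤ, B (h (x, t)) = true ∧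
      ∀ z : ℤ, B (z, t + 1) = true → |(h (x, t)).1 - x| ≤ |z - x|)
    (hal : ∀ (u : ℝ) (s : ℤ), ((h (al u s, s - 1)).1 : ℝ) < u)
    (har : ∀ (u : ℝ) (s : ℤ), u < ((h (ar u s, s - 1)).1 : ℝ)) (u : ℝ) (s : ℤ) :
    al u s < ar u s :=
  (monotone_fst_h hlevel hopen (s - 1)).reflect_lt (by exact_mod_cast (hal u s).trans (har u s))

theorem dualStep_fst_lt_of_lt_fst_h
    (har : ∀ (u : ℝ) (s : ℤ), ∀ z : ℤ, B (z, s - 1) = true → u < ((h (z, s - 1)).1 : ℝ) →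
      ar u s ≤ z)
    {u : ℝ} {s y : ℤ} (hlt : al u s < ar u s) (hy : B (y, s - 1) = true)
    (hu : u < ((h (y, s - 1)).1 : ℝ)) : (dualStep al ar (u, s)).1 < y := by
  have hlt' : (al u s : ℝ) < ar u s := by exact_mod_cast hlt
  have hle : (ar u s : ℝ) ≤ y := by exact_mod_cast har u s y hy hu
  simp only [dualStep]
  linarith

theorem lt_dualStep_fst_of_fst_h_lt
    (hal : ∀ (u : ℝ) (s : ℤ), ∀ z : ℤ, B (z, s - 1) = true → ((h (z, s - 1)).1 : ℝ) < u →
      z ≤ al u s)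
    {u : ℝ} {s y : ℤ} (hlt : al u s < ar u s) (hy : B (y, s - 1) = true)
    (hu : ((h (y, s - 1)).1 : ℝ) < u) : (y : ℝ) < (dualStep al ar (u, s)).1 := by
  have hlt' : (al u s : ℝ) < ar u s := by exact_mod_cast hlt
  have hle : (y : ℝ) ≤ al u s := by exact_mod_cast hal u s y hy hu
  simp only [dualStep]
  linarith

theorem dualStep_iterate_snd (k : ℕ) (p : ℝ × ℤ) : ((dualStep al ar)^[k] p).2 = p.2 - k := by
  induction k with
  | zero => simp
  | succ k ih =>
    rw [Function.iterate_succ_apply', dualStep, ih]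
    push_cast
    ring

theorem dualStep_iterate_eq (k : ℕ) (u : ℝ) (t : ℤ) :
    (dualStep al ar)^[k] (u, t) = (((dualStep al ar)^[k] (u, t)).1, t - k) :=
  Prod.ext rfl (dualStep_iterate_snd k _)

theorem ancestors_between_dual_paths (hlevel : ∀ u, (h u).2 = u.2 + 1)
    (hopen : ∀ x t : ℤ, B (h (x, t)) = true ∧
      ∀ z : ℤ, B (z, t + 1) = true → |(h (x, t)).1 - x| ≤ |z - x|)
    (hal : ∀ (u : ℝ) (s : ℤ), B (al u s, s - 1) = true ∧ ((h (al u s, s - 1)).1 : ℝ) < u ∧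
      ∀ z : ℤ, B (z, s - 1) = true → ((h (z, s - 1)).1 : ℝ) < u → z ≤ al u s)
    (har : ∀ (u : ℝ) (s : ℤ), B (ar u s, s - 1) = true ∧ u < ((h (ar u s, s - 1)).1 : ℝ) ∧
      ∀ z : ℤ, B (z, s - 1) = true → u < ((h (z, s - 1)).1 : ℝ) → ar u s ≤ z)
    {x t : ℤ} {l r : ℝ} (hl : l < x) (hr : x < r) :
    ∀ (k : ℕ) (y : ℤ), B (y, t - (k : ℤ)) = true → h^[k] (y, t - (k : ℤ)) = (x, t) →
      ((dualStep al ar)^[k] (l, t)).1 < (y : ℝ) ∧ (y : ℝ) < ((dualStep al ar)^[k] (r, t)).1 := by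
  have hlt := al_lt_ar hlevel hopen (fun u s => (hal u s).2.1) (fun u s => (har u s).2.1)
  intro k
  induction k with
  | zero =>
    rintro y - hy
    obtain rfl : y = x := congrArg Prod.fst hy
    exact ⟨hl, hr⟩
  | succ k ih =>
    intro y hy hanc
    have hlev : t - ((k + 1 : ℕ) : ℤ) = t - k - 1 := by push_cast; ring
    rw [hlev] at hy hanc
    have hstep : h (y, t - k - 1) = ((h (y, t - k - 1)).1, t - k) := by
      rw [h_eq hlevel, sub_add_cancel]
    obtain ⟨ihl, ihr⟩ := ih (h (y, t - k - 1)).1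
      (by simpa only [← hstep] using (hopen y (t - k - 1)).1)
      (by rwa [Function.iterate_succ_apply, hstep] at hanc)
    rw [Function.iterate_succ_apply', Function.iterate_succ_apply', dualStep_iterate_eq k l,
      dualStep_iterate_eq k r]
    exact ⟨dualStep_fst_lt_of_lt_fst_h (fun u s => (har u s).2.2) (hlt _ _) hy ihl,
      lt_dualStep_fst_of_fst_h_lt (fun u s => (hal u s).2.2) (hlt _ _) hy ihr⟩

end DrainageNetwork

open DrainageNetwork in
theorem cluster_enclosed_by_dual_paths_general
    (B : ℤ × ℤ → Bool) (h : ℤ × ℤ → ℤ × ℤ)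
    (hlevel : ∀ u, (h u).2 = u.2 + 1)
    -- `h` maps to an open vertex at minimal `L¹`-distance on the next level:
    (hopen : ∀ x t : ℤ, B (h (x, t)) = true ∧
      ∀ z : ℤ, B (z, t + 1) = true → |(h (x, t)).1 - x| ≤ |z - x|)
    -- `J⁺` and `J⁻`: distances to the nearest open vertices to the right/left on the same level
    (Jp Jm : ℤ × ℤ → ℤ)
    (hJp : ∀ u, 0 < Jp u ∧ B (u.1 + Jp u, u.2) = true ∧
      ∀ k : ℤ, 0 < k → B (u.1 + k, u.2) = true → Jp u ≤ k)
    (hJm : ∀ u, 0 < Jm u ∧ B (u.1 - Jm u, u.2) = true ∧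
      ∀ k : ℤ, 0 < k → B (u.1 - k, u.2) = true → Jm u ≤ k)
    -- `a^l(u,s)`: rightmost open vertex on level `s-1` whose progeny lies strictly left of `u`;
    -- `a^r(u,s)`: leftmost open vertex on level `s-1` whose progeny lies strictly right of `u`:
    (al ar : ℝ → ℤ → ℤ)
    (hal : ∀ (u : ℝ) (s : ℤ), B (al u s, s - 1) = true ∧ ((h (al u s, s - 1)).1 : ℝ) < u ∧
      ∀ z : ℤ, B (z, s - 1) = true → ((h (z, s - 1)).1 : ℝ) < u → z ≤ al u s)
    (har : ∀ (u : ℝ) (s : ℤ), B (ar u s, s - 1) = true ∧ u < ((h (ar u s, s - 1)).1 : ℝ) ∧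
      ∀ z : ℤ, B (z, s - 1) = true → u < ((h (z, s - 1)).1 : ℝ) → ar u s ≤ z)
    (x t : ℤ) :
    ∀ (k : ℕ) (y : ℤ), B (y, t - (k : ℤ)) = true → h^[k] (y, t - (k : ℤ)) = (x, t) →
      ((dualStep al ar)^[k] ((x : ℝ) - (Jm (x, t) : ℝ) / 2, t)).1 < (y : ℝ) ∧
      (y : ℝ) < ((dualStep al ar)^[k] ((x : ℝ) + (Jp (x, t) : ℝ) / 2, t)).1 := by
  have hJm_pos : (0 : ℝ) < Jm (x, t) := by exact_mod_cast (hJm (x, t)).1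
  have hJp_pos : (0 : ℝ) < Jp (x, t) := by exact_mod_cast (hJp (x, t)).1
  exact ancestors_between_dual_paths hlevel hopen hal har (by linarith) (by linarith)

/-- In the drainage network on `ℤ²` (deterministic configuration `B` of open vertices, forward
map `h` to the nearest open vertex on the next level), if `(x,t)` is open then every `k`-th
generation ancestor `(y, t-k)` of `(x,t)` lies strictly between the `k`-th points of the dual
paths started at the left dual neighbour `l̂(x,t) = (x - J⁻/2, t)` and at the right dual
neighbour `r̂(x,t) = (x + J⁺/2, t)`. -/
theorem cluster_enclosed_by_dual_paths
    (B : ℤ × ℤ → Bool) (h : ℤ × ℤ → ℤ × ℤ)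
    (hlevel : ∀ u, (h u).2 = u.2 + 1)
    -- on each level there are open vertices arbitrarily far to the right and to the left:
    (hexist : ∀ x t : ℤ, (∃ k : ℤ, 0 < k ∧ B (x + k, t) = true) ∧
      (∃ k : ℤ, 0 < k ∧ B (x - k, t) = true))
    -- `h` maps to an open vertex at minimal `L¹`-distance on the next level:
    (hopen : ∀ x t : ℤ, B (h (x, t)) = true ∧
      ∀ z : ℤ, B (z, t + 1) = true → |(h (x, t)).1 - x| ≤ |z - x|)
    -- `J⁺` and `J⁻`: distances to the nearest open vertices to the right/left on the same level
    (Jp Jm : ℤ × ℤ → ℤ)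
    (hJp : ∀ u, 0 < Jp u ∧ B (u.1 + Jp u, u.2) = true ∧
      ∀ k : ℤ, 0 < k → B (u.1 + k, u.2) = true → Jp u ≤ k)
    (hJm : ∀ u, 0 < Jm u ∧ B (u.1 - Jm u, u.2) = true ∧
      ∀ k : ℤ, 0 < k → B (u.1 - k, u.2) = true → Jm u ≤ k)
    -- `a^l(u,s)`: rightmost open vertex on level `s-1` whose progeny lies strictly left of `u`;
    -- `a^r(u,s)`: leftmost open vertex on level `s-1` whose progeny lies strictly right of `u`:
    (al ar : ℝ → ℤ → ℤ)
    (hal : ∀ (u : ℝ) (s : ℤ), B (al u s, s - 1) = true ∧ ((h (al u s, s - 1)).1 : ℝ) < u ∧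
      ∀ z : ℤ, B (z, s - 1) = true → ((h (z, s - 1)).1 : ℝ) < u → z ≤ al u s)
    (har : ∀ (u : ℝ) (s : ℤ), B (ar u s, s - 1) = true ∧ u < ((h (ar u s, s - 1)).1 : ℝ) ∧
      ∀ z : ℤ, B (z, s - 1) = true → u < ((h (z, s - 1)).1 : ℝ) → ar u s ≤ z)
    (x t : ℤ) (hxt : B (x, t) = true) :
    ∀ (k : ℕ) (y : ℤ), B (y, t - (k : ℤ)) = true → h^[k] (y, t - (k : ℤ)) = (x, t) →
      ((dualStep al ar)^[k] ((x : ℝ) - (Jm (x, t) : ℝ) / 2, t)).1 < (y : ℝ) ∧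
      (y : ℝ) < ((dualStep al ar)^[k] ((x : ℝ) + (Jp (x, t) : ℝ) / 2, t)).1 :=
  cluster_enclosed_by_dual_paths_general B h hlevel hopen Jp Jm hJp hJm al ar hal har x t
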